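/- arXiv:2303.17288 — 2 statements merged into one kernel-verified Lean document; each statement's English description precedes it below -/
import Mathlib

section
/- Let ω(x) = tanh(x/√2) and define the linear operator L by (Lφ)(x) = −φ''(x) + (3ω(x)² − 1)φ(x). If φ : ℝ → ℝ is four times differentiable, φ and φ'' are bounded on ℝ, and L(Lφ)(x) = 0 for every x ∈ ℝ, then there exists a constant λ ∈ ℝ such that φ(x) = λ ω'(x) for all x. -/
open Real Filter

/-- The Allen–Cahn heteroclinic `ω(x) = tanh (x/√2)`. -/
noncomputable def ω (x : ℝ) : ℝ := Real.tanh (x / Real.sqrt 2)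

/-- The linearized Allen–Cahn operator `L = −∂ₓₓ + W''(ω)` at `ω`, where `W''(s) = 3s² − 1`. -/
noncomputable def L (f : ℝ → ℝ) (x : ℝ) : ℝ :=
  -deriv (deriv f) x + (3 * (ω x) ^ 2 - 1) * f x

open Topology

/-!
`ψ := Lφ` is bounded and `Lψ = 0`. On bounded functions the kernel of `L` is spanned by
`ω' > 0`: for a bounded solution `u` of `Lu = 0` the Wronskian `W(ω', u)` is constant, and it
tends to zero at infinity because `u'` is bounded (by the mean value theorem, from the bounds on
`u` and `u''`) while `ω', ω'' → 0`; hence `(u / ω')' = W / ω'² = 0`. So `Lφ = μ ω'`. Now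
`W(ω', φ)' = -μ ω'²` while `W(ω', φ)` vanishes at `±∞`, so `μ ∫ ω'² = 0`, i.e. `μ = 0`, and `φ`
itself is a bounded solution of `Lφ = 0`.
-/

namespace Real

lemma hasDerivAt_tanh (x : ℝ) : HasDerivAt tanh (1 - tanh x ^ 2) x := by
  have h := (hasDerivAt_sinh x).div (hasDerivAt_cosh x) (cosh_pos x).ne'
  rw [show tanh = sinh / cosh from funext tanh_eq_sinh_div_cosh]
  refine h.congr_deriv ?_
  rw [Pi.div_apply, div_pow, eq_sub_iff_add_eq, ← add_div, div_eq_one_iff_eq (by positivity)]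
  ring

lemma tanh_eq_one_sub_exp_div (x : ℝ) :
    tanh x = (1 - exp (-(2 * x))) / (1 + exp (-(2 * x))) := by
  have h : exp x * exp (-x) = 1 := by rw [← exp_add]; simp
  rw [tanh_eq, show -(2 * x) = -x + -x by ring, exp_add]
  field_simp
  linear_combination 2 * exp (-x) * h

lemma tendsto_tanh_atTop : Tendsto tanh atTop (𝓝 1) := by
  have h : Tendsto (fun x => exp (-(2 * x))) atTop (𝓝 0) :=
    tendsto_exp_neg_atTop_nhds_zero.comp (tendsto_id.const_mul_atTop two_pos)
  have := ((tendsto_const_nhds (x := (1 : ℝ))).sub h).div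
    ((tendsto_const_nhds (x := (1 : ℝ))).add h) (by norm_num)
  rw [sub_zero, add_zero, div_one] at this
  exact this.congr fun x => (tanh_eq_one_sub_exp_div x).symm

lemma tendsto_tanh_atBot : Tendsto tanh atBot (𝓝 (-1)) := by
  simpa [Function.comp_def] using (tendsto_tanh_atTop.comp tendsto_neg_atBot_atTop).neg

lemma contDiff_tanh {n : WithTop ℕ∞} : ContDiff ℝ n tanh := by
  rw [show tanh = sinh / cosh from funext tanh_eq_sinh_div_cosh]
  exact contDiff_sinh.div contDiff_cosh fun x => (cosh_pos x).ne'

end Real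

lemma abs_deriv_le_of_abs_le {f : ℝ → ℝ} (hf : ContDiff ℝ 2 f) {M K : ℝ}
    (hM : ∀ x, |f x| ≤ M) (hK : ∀ x, |deriv (deriv f) x| ≤ K) (x : ℝ) :
    |deriv f x| ≤ 2 * M + K := by
  have hf1 : Differentiable ℝ f := hf.differentiable two_ne_zero
  have hf2 : Differentiable ℝ (deriv f) := hf.differentiable_deriv_two
  obtain ⟨c, hc, hfc⟩ := exists_deriv_eq_slope f (lt_add_one x) hf1.continuous.continuousOn
    hf1.differentiableOn
  have hc_le : |deriv f c| ≤ 2 * M := by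
    rw [hfc, add_sub_cancel_left, div_one]
    linarith [abs_sub (f (x + 1)) (f x), hM x, hM (x + 1)]
  obtain ⟨d, -, hfd⟩ := exists_deriv_eq_slope (deriv f) hc.1 hf2.continuous.continuousOn
    hf2.differentiableOn
  have hcx : 0 < c - x := sub_pos.2 hc.1
  have hdiff_le : |deriv f c - deriv f x| ≤ K := by
    rw [eq_div_iff hcx.ne'] at hfd
    rw [← hfd, abs_mul, abs_of_pos hcx]
    nlinarith [hK d, abs_nonneg (deriv (deriv f) d), hc.2]
  linarith [abs_sub_abs_le_abs_sub (deriv f x) (deriv f c), abs_sub_comm (deriv f x) (deriv f c)]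

lemma eq_of_hasDerivAt_zero_of_tendsto {E : Type*} [NormedAddCommGroup E] [NormedSpace ℝ E]
    {f : ℝ → E} {l : Filter ℝ} [l.NeBot] {a : E} (hf : ∀ x, HasDerivAt f 0 x)
    (hl : Tendsto f l (𝓝 a)) (x : ℝ) : f x = a := by
  have hconst : ∀ y, f y = f x := fun y =>
    is_const_of_deriv_eq_zero (fun z => (hf z).differentiableAt) (fun z => (hf z).deriv) y x
  exact tendsto_nhds_unique (tendsto_const_nhds.congr fun y => (hconst y).symm) hl

noncomputable def wronskian (u v : ℝ → ℝ) (x : ℝ) : ℝ := u x * deriv v x - deriv u x * v x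

lemma hasDerivAt_wronskian {u v : ℝ → ℝ} (hu : ContDiff ℝ 2 u) (hv : ContDiff ℝ 2 v) (x : ℝ) :
    HasDerivAt (wronskian u v) (u x * deriv (deriv v) x - deriv (deriv u) x * v x) x := by
  have hu1 := (hu.differentiable two_ne_zero x).hasDerivAt
  have hv1 := (hv.differentiable two_ne_zero x).hasDerivAt
  have hu2 := (hu.differentiable_deriv_two x).hasDerivAt
  have hv2 := (hv.differentiable_deriv_two x).hasDerivAt
  exact ((hu1.mul hv2).sub (hu2.mul hv1)).congr_deriv (by ring)

lemma tendsto_wronskian_of_tendsto_zero {u v : ℝ → ℝ} {l : Filter ℝ}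
    (hu : Tendsto u l (𝓝 0)) (hu' : Tendsto (deriv u) l (𝓝 0))
    (hv : ∃ M, ∀ x, |v x| ≤ M) (hv' : ∃ M, ∀ x, |deriv v x| ≤ M) :
    Tendsto (wronskian u v) l (𝓝 0) := by
  obtain ⟨M, hM⟩ := hv
  obtain ⟨M', hM'⟩ := hv'
  have h1 := hu.zero_mul_isBoundedUnder_le (isBoundedUnder_of ⟨M', hM'⟩)
  have h2 := hu'.zero_mul_isBoundedUnder_le (isBoundedUnder_of ⟨M, hM⟩)
  unfold wronskian
  simpa using h1.sub h2

lemma exists_eq_const_mul_of_wronskian_eq_zero {u v : ℝ → ℝ} (hu : Differentiable ℝ u)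
    (hv : Differentiable ℝ v) (hv0 : ∀ x, v x ≠ 0) (hW : ∀ x, wronskian v u x = 0) :
    ∃ c, ∀ x, u x = c * v x := by
  have hquot : ∀ x, HasDerivAt (fun y => u y / v y) 0 x := by
    intro x
    have hWx : v x * deriv u x - deriv v x * u x = 0 := hW x
    refine ((hu x).hasDerivAt.div (hv x).hasDerivAt (hv0 x)).congr_deriv ?_
    rw [div_eq_zero_iff]
    exact Or.inl (by linear_combination hWx)
  refine ⟨u 0 / v 0, fun x => ?_⟩
  rw [← div_eq_iff (hv0 x)]
  exact is_const_of_deriv_eq_zero (fun y => (hquot y).differentiableAt)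
    (fun y => (hquot y).deriv) x 0

theorem exists_eq_const_mul_of_bounded_solution {q u v : ℝ → ℝ} {l : Filter ℝ} [l.NeBot]
    {Q : ℝ} (hq : ∀ x, |q x| ≤ Q) (hu : ContDiff ℝ 2 u) (hv : ContDiff ℝ 2 v)
    (hu_eq : ∀ x, deriv (deriv u) x = q x * u x) (hv_eq : ∀ x, deriv (deriv v) x = q x * v x)
    (hu_bdd : ∃ M, ∀ x, |u x| ≤ M) (hv_ne : ∀ x, v x ≠ 0)
    (hv_lim : Tendsto v l (𝓝 0)) (hv'_lim : Tendsto (deriv v) l (𝓝 0)) :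
    ∃ c, ∀ x, u x = c * v x := by
  obtain ⟨M, hM⟩ := hu_bdd
  have hu'' : ∀ x, |deriv (deriv u) x| ≤ Q * M := fun x => by
    rw [hu_eq, abs_mul]
    exact mul_le_mul (hq x) (hM x) (abs_nonneg _) ((abs_nonneg _).trans (hq x))
  have hW : ∀ x, wronskian v u x = 0 :=
    eq_of_hasDerivAt_zero_of_tendsto
      (fun x => (hasDerivAt_wronskian hv hu x).congr_deriv (by rw [hu_eq, hv_eq]; ring))
      (tendsto_wronskian_of_tendsto_zero hv_lim hv'_lim ⟨M, hM⟩
        ⟨_, abs_deriv_le_of_abs_le hu hM hu''⟩)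
  exact exists_eq_const_mul_of_wronskian_eq_zero (hu.differentiable two_ne_zero)
    (hv.differentiable two_ne_zero) hv_ne hW

lemma contDiff_ω {n : WithTop ℕ∞} : ContDiff ℝ n ω :=
  contDiff_tanh.comp (contDiff_id.div_const _)

lemma hasDerivAt_ω (x : ℝ) : HasDerivAt ω ((1 - ω x ^ 2) / √2) x := by
  have h := (hasDerivAt_tanh (x / √2)).comp x ((hasDerivAt_id x).div_const √2)
  exact h.congr_deriv (by simp [ω, div_eq_mul_inv])

lemma deriv_ω : deriv ω = fun x => (1 - ω x ^ 2) / √2 :=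
  funext fun x => (hasDerivAt_ω x).deriv

lemma ω_sq_lt_one (x : ℝ) : ω x ^ 2 < 1 := tanh_sq_lt_one _

lemma deriv_ω_pos (x : ℝ) : 0 < deriv ω x := by
  rw [deriv_ω]
  exact div_pos (sub_pos.2 (ω_sq_lt_one x)) (by positivity)

/-- The Allen–Cahn equation `ω'' = W'(ω)`. -/
lemma deriv_deriv_ω : deriv (deriv ω) = fun x => ω x ^ 3 - ω x := by
  refine funext fun x => ?_
  rw [deriv_ω]
  refine ((((hasDerivAt_ω x).pow 2).const_sub 1).div_const √2).deriv.trans ?_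
  field_simp
  rw [sq_sqrt zero_le_two]
  ring

lemma deriv_deriv_deriv_ω (x : ℝ) :
    deriv (deriv (deriv ω)) x = (3 * ω x ^ 2 - 1) * deriv ω x := by
  rw [deriv_deriv_ω]
  refine (((hasDerivAt_ω x).pow 3).sub (hasDerivAt_ω x)).deriv.trans ?_
  rw [deriv_ω]
  ring

lemma abs_three_mul_ω_sq_sub_one_le (x : ℝ) : |3 * ω x ^ 2 - 1| ≤ 2 := by
  rw [abs_le]
  constructor <;> nlinarith [ω_sq_lt_one x, sq_nonneg (ω x)]

lemma tendsto_ω_atTop : Tendsto ω atTop (𝓝 1) :=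
  tendsto_tanh_atTop.comp (tendsto_id.atTop_div_const (by positivity))

lemma tendsto_ω_atBot : Tendsto ω atBot (𝓝 (-1)) :=
  tendsto_tanh_atBot.comp (tendsto_id.atBot_div_const (by positivity))

lemma tendsto_ω_sq_cocompact : Tendsto (fun x => ω x ^ 2) (cocompact ℝ) (𝓝 1) := by
  rw [cocompact_eq_atBot_atTop, tendsto_sup]
  exact ⟨by simpa using tendsto_ω_atBot.pow 2, by simpa using tendsto_ω_atTop.pow 2⟩

lemma tendsto_deriv_ω_cocompact : Tendsto (deriv ω) (cocompact ℝ) (𝓝 0) := by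
  rw [deriv_ω]
  simpa using (tendsto_ω_sq_cocompact.const_sub 1).div_const √2

lemma tendsto_deriv_deriv_ω_cocompact : Tendsto (deriv (deriv ω)) (cocompact ℝ) (𝓝 0) := by
  have hbdd : IsBoundedUnder (· ≤ ·) (cocompact ℝ) (norm ∘ ω) :=
    isBoundedUnder_of ⟨1, fun x => (abs_tanh_lt_one _).le⟩
  have hsq : Tendsto (fun x => ω x ^ 2 - 1) (cocompact ℝ) (𝓝 0) := by
    simpa using tendsto_ω_sq_cocompact.sub_const 1
  have h := isBoundedUnder_le_mul_tendsto_zero hbdd hsq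
  rw [deriv_deriv_ω]
  simpa [mul_sub, ← pow_succ'] using h

lemma contDiff_L {n : WithTop ℕ∞} {f : ℝ → ℝ} (hf : ContDiff ℝ (n + 1 + 1) f) :
    ContDiff ℝ n (L f) :=
  hf.deriv'.deriv'.neg.add ((contDiff_const.mul (contDiff_ω.pow 2)).sub contDiff_const |>.mul
    hf.of_succ.of_succ)

lemma abs_L_le {f : ℝ → ℝ} {M x : ℝ} (h0 : |f x| ≤ M) (h2 : |deriv (deriv f) x| ≤ M) :
    |L f x| ≤ 3 * M := by
  have hq := mul_le_mul (abs_three_mul_ω_sq_sub_one_le x) h0 (abs_nonneg _) zero_le_two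
  calc |L f x| ≤ |deriv (deriv f) x| + |3 * ω x ^ 2 - 1| * |f x| := by
        rw [L, ← abs_neg (deriv (deriv f) x), ← abs_mul]
        exact abs_add_le _ _
    _ ≤ 3 * M := by linarith

lemma deriv_deriv_eq_of_L_eq {f : ℝ → ℝ} {x g : ℝ} (h : L f x = g) :
    deriv (deriv f) x = (3 * ω x ^ 2 - 1) * f x - g := by
  rw [L] at h
  linarith

theorem exists_eq_mul_deriv_ω_of_L_eq_zero {u : ℝ → ℝ} (hu : ContDiff ℝ 2 u)
    (hbdd : ∃ M, ∀ x, |u x| ≤ M) (hL : ∀ x, L u x = 0) : ∃ c, ∀ x, u x = c * deriv ω x :=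
  exists_eq_const_mul_of_bounded_solution (l := atTop) abs_three_mul_ω_sq_sub_one_le hu
    (contDiff_ω (n := 2 + 1)).deriv' (fun x => by simpa using deriv_deriv_eq_of_L_eq (hL x))
    deriv_deriv_deriv_ω hbdd (fun x => (deriv_ω_pos x).ne')
    (tendsto_deriv_ω_cocompact.mono_left atTop_le_cocompact)
    (tendsto_deriv_deriv_ω_cocompact.mono_left atTop_le_cocompact)

theorem eq_zero_of_L_eq_mul_deriv_ω {φ : ℝ → ℝ} (hφ : ContDiff ℝ 2 φ) {M : ℝ}
    (hM : ∀ x, |φ x| ≤ M) (hM2 : ∀ x, |deriv (deriv φ) x| ≤ M) {μ : ℝ}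
    (hμ : ∀ x, L φ x = μ * deriv ω x) : μ = 0 := by
  set G : ℝ → ℝ := fun x => (ω x - ω x ^ 3 / 3) / √2
  have hG : ∀ x, HasDerivAt G (deriv ω x ^ 2) x := fun x =>
    (((hasDerivAt_ω x).sub (((hasDerivAt_ω x).pow 3).div_const 3)).div_const √2).congr_deriv
      (by rw [deriv_ω]; field_simp; norm_num; ring)
  have hF : ∀ x, HasDerivAt (fun y => wronskian (deriv ω) φ y + μ * G y) 0 x := by
    intro x
    refine ((hasDerivAt_wronskian (contDiff_ω (n := 2 + 1)).deriv' hφ x).add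
      ((hG x).const_mul μ)).congr_deriv ?_
    rw [deriv_deriv_eq_of_L_eq (hμ x), deriv_deriv_deriv_ω]
    ring
  have hW : Tendsto (wronskian (deriv ω) φ) (cocompact ℝ) (𝓝 0) :=
    tendsto_wronskian_of_tendsto_zero tendsto_deriv_ω_cocompact tendsto_deriv_deriv_ω_cocompact
      ⟨M, hM⟩ ⟨_, abs_deriv_le_of_abs_le hφ hM hM2⟩
  have hG_top : Tendsto G atTop (𝓝 ((1 - 1 ^ 3 / 3) / √2)) :=
    (tendsto_ω_atTop.sub ((tendsto_ω_atTop.pow 3).div_const 3)).div_const √2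
  have hG_bot : Tendsto G atBot (𝓝 ((-1 - (-1) ^ 3 / 3) / √2)) :=
    (tendsto_ω_atBot.sub ((tendsto_ω_atBot.pow 3).div_const 3)).div_const √2
  have htop := eq_of_hasDerivAt_zero_of_tendsto hF
    ((hW.mono_left atTop_le_cocompact).add (hG_top.const_mul μ)) 0
  have hbot := eq_of_hasDerivAt_zero_of_tendsto hF
    ((hW.mono_left atBot_le_cocompact).add (hG_bot.const_mul μ)) 0
  have h := htop.symm.trans hbot
  field_simp at h
  linarith

/-- Any bounded solution (with bounded second derivative) of `L(Lφ) = 0` is a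
multiple of `ω'`. -/
theorem kernel_of_L_squared (φ : ℝ → ℝ) (hreg : ContDiff ℝ 4 φ)
    (hbdd : ∃ M : ℝ, ∀ x : ℝ, |φ x| ≤ M ∧ |deriv (deriv φ) x| ≤ M)
    (hker : ∀ x : ℝ, L (L φ) x = 0) :
    ∃ lam : ℝ, ∀ x : ℝ, φ x = lam * deriv ω x := by
  obtain ⟨M, hM⟩ := hbdd
  have hφ : ContDiff ℝ 2 φ := hreg.of_le (by norm_num)
  obtain ⟨μ, hμ⟩ := exists_eq_mul_deriv_ω_of_L_eq_zero (contDiff_L (n := 2) hreg)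
    ⟨3 * M, fun x => abs_L_le (hM x).1 (hM x).2⟩ hker
  have hμ0 : μ = 0 := eq_zero_of_L_eq_mul_deriv_ω hφ (fun x => (hM x).1) (fun x => (hM x).2) hμ
  exact exists_eq_mul_deriv_ω_of_L_eq_zero hφ ⟨M, fun x => (hM x).1⟩ (by simpa [hμ0] using hμ)
end

section
/- Let γ₁ < γ₂ be real numbers and define ξ : ℝ → ℝ by ξ(x) = [6/(e^{√2(γ₂−γ₁)} − 1)] { e^{−√2(x−γ₂)} ln(1 + e^{√2(x−γ₂)}) − e^{−√2(x−γ₁)} ln(1 + e^{√2(x−γ₁)}) + e^{√2(x−γ₁)} ln(1 + e^{−√2(x−γ₁)}) − e^{√2(x−γ₂)} ln(1 + e^{−√2(x−γ₂)}) }. Then ξ is twice differentiable and satisfies, for every x ∈ ℝ, ξ''(x) − 2ξ(x) = 6 (ω(x − γ₁) − 1)(ω(x − γ₂) + 1). -/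
/-! With `F(y) = e^{-ky} log(1 + e^{ky})` one has `F' = -kF + k/(1 + e^{ky})`, so the odd and even
parts `φ, ψ` of `F` solve the first-order system `φ' = k(1 - ψ)`, `ψ' = -k(φ + tanh(ky/2))`; hence
`φ'' - k²φ = k² tanh(ky/2)`, which for `k = √2` is `2ω`. Since `ξ = c (φ(x - γ₂) - φ(x - γ₁))` with
`c = 6/(e^{√2(γ₂-γ₁)} - 1)`, the claim reduces to the identity
`(tanh a - 1)(tanh b + 1)(e^{2(a-b)} - 1) = 2(tanh b - tanh a)`. -/

open Real

/-- The explicit first correction function between two interfaces located at `γ₁ < γ₂`. -/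
noncomputable def xiCorr (γ₁ γ₂ x : ℝ) : ℝ :=
  (6 / (Real.exp (Real.sqrt 2 * (γ₂ - γ₁)) - 1)) *
    (Real.exp (-(Real.sqrt 2) * (x - γ₂)) * Real.log (1 + Real.exp (Real.sqrt 2 * (x - γ₂)))
      - Real.exp (-(Real.sqrt 2) * (x - γ₁)) * Real.log (1 + Real.exp (Real.sqrt 2 * (x - γ₁)))
      + Real.exp (Real.sqrt 2 * (x - γ₁)) * Real.log (1 + Real.exp (-(Real.sqrt 2) * (x - γ₁)))
      - Real.exp (Real.sqrt 2 * (x - γ₂)) * Real.log (1 + Real.exp (-(Real.sqrt 2) * (x - γ₂))))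

lemma one_div_one_add_exp_add_one_div_one_add_exp_neg (z : ℝ) :
    1 / (1 + exp z) + 1 / (1 + exp (-z)) = 1 := by
  rw [exp_neg]
  field_simp
  ring

lemma one_div_one_add_exp_sub_one_div_one_add_exp_neg (z : ℝ) :
    1 / (1 + exp z) - 1 / (1 + exp (-z)) = -tanh (z / 2) := by
  rw [tanh_eq_sinh_div_cosh, sinh_eq, cosh_eq, exp_neg, exp_neg]
  have hz : exp z = exp (z / 2) ^ 2 := by rw [← exp_nat_mul]; ring_nf
  rw [hz]
  have := exp_pos (z / 2)
  field_simp
  ring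

lemma tanh_sub_one_mul_tanh_add_one_mul (a b : ℝ) :
    (tanh a - 1) * (tanh b + 1) * (exp (2 * (a - b)) - 1) = 2 * (tanh b - tanh a) := by
  rw [tanh_eq_sinh_div_cosh, tanh_eq_sinh_div_cosh, sinh_eq, cosh_eq, sinh_eq, cosh_eq,
    show 2 * (a - b) = a + a + -b + -b by ring, exp_add, exp_add, exp_add, exp_neg, exp_neg]
  have := exp_pos a
  have := exp_pos b
  field_simp
  ring

section

variable (k : ℝ)

noncomputable def dampedSoftplus (y : ℝ) : ℝ := exp (-k * y) * log (1 + exp (k * y))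

noncomputable def dampedSoftplusOdd (y : ℝ) : ℝ := dampedSoftplus k y - dampedSoftplus k (-y)

noncomputable def dampedSoftplusEven (y : ℝ) : ℝ := dampedSoftplus k y + dampedSoftplus k (-y)

lemma hasDerivAt_dampedSoftplus (y : ℝ) :
    HasDerivAt (dampedSoftplus k) (-k * dampedSoftplus k y + k / (1 + exp (k * y))) y := by
  have hexp (c : ℝ) : HasDerivAt (fun y => exp (c * y)) (c * exp (c * y)) y := by
    simpa [mul_comm] using ((hasDerivAt_id y).const_mul c).exp
  have hlog := ((hexp k).const_add 1).log (by positivity)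
  refine ((hexp (-k)).mul hlog).congr_deriv ?_
  rw [dampedSoftplus, neg_mul k y, exp_neg]
  field_simp

lemma hasDerivAt_dampedSoftplus_neg (y : ℝ) :
    HasDerivAt (fun y => dampedSoftplus k (-y))
      (k * dampedSoftplus k (-y) - k / (1 + exp (-(k * y)))) y := by
  refine ((hasDerivAt_dampedSoftplus k (-y)).comp y (hasDerivAt_neg y)).congr_deriv ?_
  rw [mul_neg k y]
  ring

lemma hasDerivAt_dampedSoftplusOdd (y : ℝ) :
    HasDerivAt (dampedSoftplusOdd k) (k * (1 - dampedSoftplusEven k y)) y := by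
  refine ((hasDerivAt_dampedSoftplus k y).sub (hasDerivAt_dampedSoftplus_neg k y)).congr_deriv ?_
  rw [dampedSoftplusEven]
  linear_combination k * one_div_one_add_exp_add_one_div_one_add_exp_neg (k * y)

lemma hasDerivAt_dampedSoftplusEven (y : ℝ) :
    HasDerivAt (dampedSoftplusEven k)
      (-k * (dampedSoftplusOdd k y + tanh (k * y / 2))) y := by
  refine ((hasDerivAt_dampedSoftplus k y).add (hasDerivAt_dampedSoftplus_neg k y)).congr_deriv ?_
  rw [dampedSoftplusOdd]
  linear_combination k * one_div_one_add_exp_sub_one_div_one_add_exp_neg (k * y)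

lemma deriv_dampedSoftplusOdd :
    deriv (dampedSoftplusOdd k) = fun y => k * (1 - dampedSoftplusEven k y) :=
  funext fun y => (hasDerivAt_dampedSoftplusOdd k y).deriv

lemma hasDerivAt_deriv_dampedSoftplusOdd (y : ℝ) :
    HasDerivAt (deriv (dampedSoftplusOdd k))
      (k ^ 2 * (dampedSoftplusOdd k y + tanh (k * y / 2))) y := by
  rw [deriv_dampedSoftplusOdd]
  refine (((hasDerivAt_dampedSoftplusEven k y).const_sub 1).const_mul k).congr_deriv ?_
  ring

end

lemma hasDerivAt_const_mul_sub_translates {f f' : ℝ → ℝ} (hf : ∀ y, HasDerivAt f (f' y) y)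
    (c a b x : ℝ) :
    HasDerivAt (fun x => c * (f (x - a) - f (x - b))) (c * (f' (x - a) - f' (x - b))) x :=
  (((hf (x - a)).comp_sub_const x a).sub ((hf (x - b)).comp_sub_const x b)).const_mul c

lemma xiCorr_eq (γ₁ γ₂ : ℝ) :
    xiCorr γ₁ γ₂ = fun x => 6 / (exp (√2 * (γ₂ - γ₁)) - 1) *
      (dampedSoftplusOdd √2 (x - γ₂) - dampedSoftplusOdd √2 (x - γ₁)) := by
  funext x
  simp only [xiCorr, dampedSoftplusOdd, dampedSoftplus, mul_neg, neg_mul, neg_neg]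
  ring

lemma ω_eq_tanh (y : ℝ) : ω y = tanh (√2 * y / 2) := by
  rw [ω]
  congr 1
  field_simp
  rw [Real.sq_sqrt zero_le_two]

/-- `ξ` is twice differentiable and solves `ξ'' − 2ξ = 6(ω(x−γ₁) − 1)(ω(x−γ₂) + 1)`. -/
theorem xiCorr_solves_ode (γ₁ γ₂ : ℝ) (h : γ₁ < γ₂) :
    (∀ x : ℝ, DifferentiableAt ℝ (xiCorr γ₁ γ₂) x) ∧
    (∀ x : ℝ, DifferentiableAt ℝ (deriv (xiCorr γ₁ γ₂)) x) ∧
    (∀ x : ℝ, deriv (deriv (xiCorr γ₁ γ₂)) x - 2 * xiCorr γ₁ γ₂ x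
        = 6 * (ω (x - γ₁) - 1) * (ω (x - γ₂) + 1)) := by
  set c := 6 / (exp (√2 * (γ₂ - γ₁)) - 1) with hc
  set φ := dampedSoftplusOdd √2
  have hξ := xiCorr_eq γ₁ γ₂
  have hξ' (x : ℝ) : HasDerivAt (xiCorr γ₁ γ₂) (c * (deriv φ (x - γ₂) - deriv φ (x - γ₁))) x :=
    hξ ▸ hasDerivAt_const_mul_sub_translates
      (fun y => (hasDerivAt_dampedSoftplusOdd √2 y).differentiableAt.hasDerivAt) c γ₂ γ₁ x
  have hξ'' (x : ℝ) : HasDerivAt (deriv (xiCorr γ₁ γ₂))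
      (c * (√2 ^ 2 * (φ (x - γ₂) + tanh (√2 * (x - γ₂) / 2))
        - √2 ^ 2 * (φ (x - γ₁) + tanh (√2 * (x - γ₁) / 2)))) x := by
    rw [funext fun x => (hξ' x).deriv]
    exact hasDerivAt_const_mul_sub_translates (hasDerivAt_deriv_dampedSoftplusOdd √2) c γ₂ γ₁ x
  refine ⟨fun x => (hξ' x).differentiableAt, fun x => (hξ'' x).differentiableAt, fun x => ?_⟩
  have hE : exp (√2 * (γ₂ - γ₁)) - 1 ≠ 0 :=
    (sub_pos.2 (one_lt_exp_iff.2 (by have := sub_pos.2 h; positivity))).ne'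
  have htanh := tanh_sub_one_mul_tanh_add_one_mul (√2 * (x - γ₁) / 2) (√2 * (x - γ₂) / 2)
  rw [show 2 * (√2 * (x - γ₁) / 2 - √2 * (x - γ₂) / 2) = √2 * (γ₂ - γ₁) by ring] at htanh
  rw [(hξ'' x).deriv, hξ, ω_eq_tanh, ω_eq_tanh, sq_sqrt zero_le_two, hc]
  field_simp
  linear_combination -htanh
end
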